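/- Let α > −1, M ≥ 1, let c_1, ..., c_M be pairwise distinct real numbers, μ_1, ..., μ_M ∈ ℝ, ν_1, ..., ν_M ∈ ℕ, set ζ(X) = Π_{j=1}^M (X − c_j)^{ν_j+1} and ν = deg ζ = Σ_{j=1}^M (ν_j + 1). Let ζ_0, ζ_1, ..., ζ_ν be real polynomials with ζ_0 = 1, ζ_ν = ζ, deg ζ_k = k, and ζ_k dividing ζ_{k+1} for each 0 ≤ k ≤ ν − 1. For each 0 ≤ j ≤ ν, let (P_m^{[j]})_{m≥0} be a sequence of real polynomials with deg P_m^{[j]} = m such that ∫_0^∞ P_m^{[j]}(x) q(x) ζ_j(x)^2 x^α e^{−x} dx = 0 for every polynomial q of degree less than m, and ∫_0^∞ (P_m^{[j]}(x))^2 ζ_j(x)^2 x^α e^{−x} dx ≠ 0. Let n ≥ ν and suppose L_n^α(c_i) · P_{n−1}^{[1]}(c_i) · P_{n−2}^{[2]}(c_i) ⋯ P_{n−ν}^{[ν]}(c_i) ≠ 0 for each i ∈ {1, ..., M}. If S_n is a real polynomial of degree n with leading coefficient (−1)^n/n! satisfying ⟨S_n, p⟩_S = 0 for every real polynomial p with deg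 p < n, then there exist real coefficients λ_0, λ_1, ..., λ_ν, not all zero, such that S_n(x) = Σ_{j=0}^ν λ_j · ζ_j(x) · P_{n−j}^{[j]}(x) for all x ∈ ℝ. -/

import Mathlib

open Polynomial Finset MeasureTheory Real

/-- The generalized Laguerre polynomial
`L_n^α(x) = Σ_{k=0}^n (−1)^k ((α+k+1)_{n−k} / ((n−k)!·k!)) x^k`. -/
noncomputable def laguerre (α : ℝ) (n : ℕ) : Polynomial ℝ :=
  ∑ k ∈ Finset.range (n + 1),
    Polynomial.C ((-1 : ℝ) ^ k * (ascPochhammer ℝ (n - k)).eval (α + k + 1) /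
      ((n - k).factorial * k.factorial)) * Polynomial.X ^ k

/-- The discrete Sobolev inner product
`⟨f, g⟩_S = ∫_0^∞ f(x) g(x) x^α e^{−x} dx + Σ_{j=1}^M μ_j f^{(ν_j)}(c_j) g^{(ν_j)}(c_j)`. -/
noncomputable def sobolevInner (α : ℝ) {M : ℕ} (c μ : Fin M → ℝ) (ν : Fin M → ℕ)
    (f g : Polynomial ℝ) : ℝ :=
  (∫ x in Set.Ioi (0 : ℝ), f.eval x * g.eval x * x ^ α * Real.exp (-x)) +
  ∑ j, μ j * (Polynomial.derivative^[ν j] f).eval (c j) *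
    (Polynomial.derivative^[ν j] g).eval (c j)

namespace SobolevAux

noncomputable def mom (α : ℝ) (f : Polynomial ℝ) : ℝ :=
  ∫ x in Set.Ioi (0:ℝ), f.eval x * x ^ α * Real.exp (-x)

lemma integrable_mom {α : ℝ} (hα : -1 < α) (f : Polynomial ℝ) :
    IntegrableOn (fun x => f.eval x * x ^ α * Real.exp (-x)) (Set.Ioi 0) := by
  induction f using Polynomial.induction_on' with
  | add p q hp hq =>
      simpa only [eval_add, add_mul, Pi.add_def] using hp.add hq
  | monomial m a =>
      have h0 : (0:ℝ) < α + m + 1 := by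
        have : (0:ℝ) ≤ m := Nat.cast_nonneg m
        linarith
      have h1 := (Real.GammaIntegral_convergent h0).const_mul a
      have heq : ∀ x ∈ Set.Ioi (0:ℝ),
          a * (Real.exp (-x) * x ^ (α + ↑m + 1 - 1))
            = (monomial m a).eval x * x ^ α * Real.exp (-x) := by
        intro x hx
        have hx0 : (0:ℝ) < x := hx
        rw [eval_monomial, show α + (m:ℝ) + 1 - 1 = α + m by ring, Real.rpow_add hx0,
          Real.rpow_natCast]
        ring
      exact MeasureTheory.IntegrableOn.congr_fun h1 heq measurableSet_Ioi

@[simp] lemma mom_zero (α : ℝ) : mom α 0 = 0 := by simp [mom]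

lemma mom_smul (α : ℝ) (r : ℝ) (f : Polynomial ℝ) : mom α (r • f) = r * mom α f := by
  have : (fun x => (r • f).eval x * x ^ α * Real.exp (-x))
      = fun x => r * (f.eval x * x ^ α * Real.exp (-x)) := by
    funext x; simp only [eval_smul, smul_eq_mul]; ring
  rw [mom, this, integral_const_mul, mom]

lemma mom_add {α : ℝ} (hα : -1 < α) (f g : Polynomial ℝ) :
    mom α (f + g) = mom α f + mom α g := by
  rw [mom, mom, mom, ← integral_add (integrable_mom hα f) (integrable_mom hα g)]
  congr 1
  funext x
  simp only [eval_add]; ring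

lemma mom_sum {α : ℝ} (hα : -1 < α) {ι : Type*} (s : Finset ι) (F : ι → Polynomial ℝ) :
    mom α (∑ i ∈ s, F i) = ∑ i ∈ s, mom α (F i) := by
  induction s using Finset.cons_induction with
  | empty => simp
  | cons i s his ih => rw [Finset.sum_cons, Finset.sum_cons, mom_add hα, ih]

lemma mom_X_pow {α : ℝ} (hα : -1 < α) (m : ℕ) :
    mom α (X ^ m) = Real.Gamma (α + m + 1) := by
  have h0 : (0:ℝ) < α + m + 1 := by
    have : (0:ℝ) ≤ m := Nat.cast_nonneg m
    linarith
  rw [Real.Gamma_eq_integral h0, mom]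
  refine setIntegral_congr_fun measurableSet_Ioi (fun x hx => ?_)
  have hx0 : (0:ℝ) < x := hx
  rw [eval_pow, eval_X, show α + (m:ℝ) + 1 - 1 = α + m by ring, Real.rpow_add hx0,
    Real.rpow_natCast]
  ring

lemma mom_sq_pos {α : ℝ} (hα : -1 < α) {f : Polynomial ℝ} (hf : f ≠ 0) :
    0 < mom α (f ^ 2) := by
  have hnonneg : 0 ≤ᵐ[volume.restrict (Set.Ioi (0:ℝ))]
      fun x => (f ^ 2).eval x * x ^ α * Real.exp (-x) := by
    refine Filter.eventually_of_mem (self_mem_ae_restrict measurableSet_Ioi) (fun x hx => ?_)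
    have hx0 : (0:ℝ) < x := hx
    have h1 : (0:ℝ) ≤ (f.eval x) ^ 2 := sq_nonneg _
    have h2 : (0:ℝ) ≤ x ^ α := (Real.rpow_pos_of_pos hx0 _).le
    have h3 : (0:ℝ) ≤ Real.exp (-x) := (Real.exp_pos _).le
    simp only [eval_pow]
    positivity
  rw [mom, setIntegral_pos_iff_support_of_nonneg_ae hnonneg (integrable_mom hα (f ^ 2))]
  have hsub : Set.Ioi (0:ℝ) \ {x | f.IsRoot x} ⊆
      (Function.support fun x => (f ^ 2).eval x * x ^ α * Real.exp (-x)) ∩ Set.Ioi 0 := by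
    rintro x ⟨hx1, hx2⟩
    refine ⟨?_, hx1⟩
    have hx0 : (0:ℝ) < x := hx1
    have hfx : f.eval x ≠ 0 := hx2
    simp only [Function.mem_support, eval_pow]
    exact mul_ne_zero (mul_ne_zero (pow_ne_zero _ hfx)
      (Real.rpow_pos_of_pos hx0 _).ne') (Real.exp_pos _).ne'
  have hroots : volume {x : ℝ | f.IsRoot x} = 0 :=
    (Polynomial.finite_setOf_isRoot hf).measure_zero volume
  have hdiff : volume (Set.Ioi (0:ℝ) \ {x | f.IsRoot x}) = ⊤ := by
    rw [measure_diff_null hroots, Real.volume_Ioi]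
  have hm := measure_mono (μ := volume) hsub
  rw [hdiff] at hm
  exact lt_of_lt_of_le (by simp) hm

lemma eq_zero_of_mom_sq {α : ℝ} (hα : -1 < α) {f : Polynomial ℝ} (h : mom α (f ^ 2) = 0) :
    f = 0 := by
  by_contra hf
  exact (mom_sq_pos hα hf).ne' h

lemma mom_mul_eq_zero_of_forall_lt {α : ℝ} (hα : -1 < α) {f : Polynomial ℝ} {m : ℕ}
    (h : ∀ k < m, mom α (f * X ^ k) = 0) :
    ∀ q : Polynomial ℝ, q.degree < (m : WithBot ℕ) → mom α (f * q) = 0 := by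
  intro q hq
  rcases eq_or_ne q 0 with rfl | hq0
  · simp
  have hnat : q.natDegree < m := by
    rcases Nat.eq_zero_or_pos m with rfl | hm
    · exfalso
      rw [Nat.cast_zero, Nat.WithBot.lt_zero_iff, degree_eq_bot] at hq
      exact hq0 hq
    · exact (natDegree_lt_iff_degree_lt hq0).mpr hq
  conv_lhs => rw [q.as_sum_range' m hnat, Finset.mul_sum]
  rw [mom_sum hα]
  refine Finset.sum_eq_zero fun k hk => ?_
  have : f * monomial k (q.coeff k) = (q.coeff k) • (f * X ^ k) := by
    rw [← C_mul_X_pow_eq_monomial, smul_eq_C_mul]; ring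
  rw [this, mom_smul, h k (Finset.mem_range.mp hk), mul_zero]

lemma fwd_eval_zero : ∀ (n : ℕ) (p : Polynomial ℝ), p.degree < (n : WithBot ℕ) →
    (fwdDiff (1:ℝ))^[n] (fun x : ℝ => p.eval x) = fun _ => 0 := by
  intro n
  induction n with
  | zero =>
      intro p hp
      have hp0 : p = 0 := by rwa [Nat.cast_zero, Nat.WithBot.lt_zero_iff, degree_eq_bot] at hp
      funext x
      simp [hp0]
  | succ n ih =>
      intro p hp
      have hstep : fwdDiff (1:ℝ) (fun x : ℝ => p.eval x)
          = fun x : ℝ => (p.comp (X + C 1) - p).eval x := by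
        funext x
        simp [fwdDiff, eval_comp]
      have hdeg' : (p.comp (X + C 1) - p).degree < (n : WithBot ℕ) := by
        rcases eq_or_ne p 0 with rfl | hp0
        · have h0 : ((0:Polynomial ℝ).comp (X + C 1) - 0) = 0 := by simp
          rw [h0, degree_zero]
          exact WithBot.bot_lt_coe n
        · have h1 : (X + C (1:ℝ)).natDegree = 1 := natDegree_X_add_C 1
          have hlc : (p.comp (X + C 1)).leadingCoeff = p.leadingCoeff := by
            rw [leadingCoeff_comp (by rw [h1]; exact one_ne_zero),
              (monic_X_add_C (1:ℝ)).leadingCoeff, one_pow, mul_one]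
          have hcne : p.comp (X + C 1) ≠ 0 :=
            leadingCoeff_ne_zero.mp (by rw [hlc]; exact leadingCoeff_ne_zero.mpr hp0)
          have hdc : (p.comp (X + C (1:ℝ))).degree = p.degree := by
            rw [degree_eq_natDegree hcne, degree_eq_natDegree hp0, natDegree_comp, h1, mul_one]
          have h2 : (p.comp (X + C 1) - p).degree < (p.comp (X + C 1)).degree :=
            degree_sub_lt hdc hcne (by rw [hlc])
          have h3 : (p.comp (X + C (1:ℝ))).degree ≤ (n : WithBot ℕ) := by
            rw [hdc, degree_eq_natDegree hp0] at *
            exact_mod_cast Nat.lt_succ_iff.mp (by exact_mod_cast hp)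
          exact lt_of_lt_of_le h2 h3
      rw [Function.iterate_succ_apply, hstep]
      exact ih _ hdeg'

lemma altsum (n : ℕ) (p : Polynomial ℝ) (hp : p.degree < (n : WithBot ℕ)) :
    ∑ j ∈ Finset.range (n + 1), (-1:ℝ) ^ j * (n.choose j : ℝ) * p.eval (j : ℝ) = 0 := by
  have h := congrFun (fwd_eval_zero n p hp) 0
  rw [fwdDiff_iter_eq_sum_shift] at h
  have key : ∀ j ∈ Finset.range (n + 1),
      (-1:ℝ) ^ j * (n.choose j : ℝ) * p.eval (j : ℝ)
        = (-1:ℝ) ^ n * (((-1 : ℤ) ^ (n - j) * (n.choose j : ℤ)) •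
            p.eval ((0:ℝ) + j • (1:ℝ))) := by
    intro j hj
    have hjn : j ≤ n := Nat.lt_succ_iff.mp (Finset.mem_range.mp hj)
    have hpow : (-1:ℝ) ^ (n - j) * (-1:ℝ) ^ j = (-1:ℝ) ^ n := by
      rw [← pow_add]
      congr 1
      omega
    have hsq : (-1:ℝ) ^ (n - j) * (-1:ℝ) ^ (n - j) = 1 := by
      rw [← pow_add]
      exact Even.neg_one_pow ⟨n - j, by ring⟩
    have hj1 : (j : ℕ) • (1:ℝ) = (j : ℝ) := by simp
    rw [hj1, zsmul_eq_mul, zero_add]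
    push_cast
    rw [← hpow]
    linear_combination (-(((-1:ℝ) ^ j) * (n.choose j : ℝ) * p.eval (j:ℝ))) * hsq
  rw [Finset.sum_congr rfl key, ← Finset.mul_sum, h, mul_zero]

lemma gamma_shift (α : ℝ) (hα : -1 < α) : ∀ m : ℕ,
    Real.Gamma (α + 1 + m) = Real.Gamma (α + 1) * (ascPochhammer ℝ m).eval (α + 1) := by
  intro m
  induction m with
  | zero => simp
  | succ m ih =>
      have hpos : (0:ℝ) < α + 1 + m := by
        have : (0:ℝ) ≤ m := Nat.cast_nonneg m
        linarith
      have h1 : α + 1 + ((m+1 : ℕ) : ℝ) = (α + 1 + m) + 1 := by push_cast; ring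
      rw [h1, Real.Gamma_add_one hpos.ne', ih, ascPochhammer_succ_eval]
      ring

lemma laguerre_coeff_top (α : ℝ) (n : ℕ) :
    (laguerre α n).coeff n = (-1:ℝ) ^ n / n.factorial := by
  rw [laguerre, finset_sum_coeff, Finset.sum_eq_single n]
  · simp [coeff_C_mul, coeff_X_pow, Nat.sub_self]
  · intro k hk hkn
    simp [coeff_C_mul, coeff_X_pow, Ne.symm hkn]
  · intro h
    exact absurd (Finset.self_mem_range_succ n) h

lemma laguerre_coeff_ne (α : ℝ) (n : ℕ) : (laguerre α n).coeff n ≠ 0 := by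
  rw [laguerre_coeff_top]
  refine div_ne_zero (pow_ne_zero _ (by norm_num)) ?_
  exact_mod_cast Nat.factorial_ne_zero n

lemma laguerre_degree (α : ℝ) (n : ℕ) : (laguerre α n).degree = (n : WithBot ℕ) := by
  refine le_antisymm ?_ (le_degree_of_ne_zero (laguerre_coeff_ne α n))
  rw [laguerre]
  refine (degree_sum_le _ _).trans ?_
  rw [Finset.sup_le_iff]
  intro k hk
  refine (degree_C_mul_X_pow_le _ _).trans ?_
  exact_mod_cast Nat.lt_succ_iff.mp (Finset.mem_range.mp hk)

lemma laguerre_ne_zero (α : ℝ) (n : ℕ) : laguerre α n ≠ 0 := by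
  intro h
  exact laguerre_coeff_ne α n (by rw [h, coeff_zero])

lemma laguerre_natDegree (α : ℝ) (n : ℕ) : (laguerre α n).natDegree = n :=
  natDegree_eq_of_degree_eq_some (laguerre_degree α n)

lemma mom_laguerre {α : ℝ} (hα : -1 < α) (n k : ℕ) (hk : k < n) :
    mom α (laguerre α n * X ^ k) = 0 := by
  have hα1 : (0:ℝ) < α + 1 := by linarith
  rw [laguerre, Finset.sum_mul, mom_sum hα]
  set pbig : Polynomial ℝ := (ascPochhammer ℝ k).comp (X + C (α + 1)) with hpbig
  have hterm : ∀ j ∈ Finset.range (n + 1),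
      mom α (C ((-1:ℝ) ^ j * (ascPochhammer ℝ (n - j)).eval (α + j + 1) /
          ((n - j).factorial * j.factorial)) * X ^ j * X ^ k)
        = (Real.Gamma (α + 1) * (ascPochhammer ℝ n).eval (α + 1) / n.factorial)
          * ((-1:ℝ) ^ j * (n.choose j : ℝ) * pbig.eval (j : ℝ)) := by
    intro j hj
    have hjn : j ≤ n := Nat.lt_succ_iff.mp (Finset.mem_range.mp hj)
    have e0 : C ((-1:ℝ) ^ j * (ascPochhammer ℝ (n - j)).eval (α + j + 1) /
          ((n - j).factorial * j.factorial)) * X ^ j * X ^ k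
        = ((-1:ℝ) ^ j * (ascPochhammer ℝ (n - j)).eval (α + j + 1) /
          ((n - j).factorial * j.factorial)) • X ^ (j + k) := by
      rw [smul_eq_C_mul, pow_add]
      ring
    rw [e0, mom_smul, mom_X_pow hα]
    have eΓ : Real.Gamma (α + ((j + k : ℕ) : ℝ) + 1)
        = Real.Gamma (α + 1) * (ascPochhammer ℝ (j + k)).eval (α + 1) := by
      rw [← gamma_shift α hα (j + k)]
      congr 1
      push_cast
      ring
    have hsplit1 : (ascPochhammer ℝ j).eval (α + 1) * (ascPochhammer ℝ k).eval ((α + 1) + j)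
        = (ascPochhammer ℝ (j + k)).eval (α + 1) := by
      have h := congrArg (Polynomial.eval (α + 1)) (ascPochhammer_mul (S := ℝ) j k)
      simpa [eval_mul, eval_comp] using h
    have hsplit2 : (ascPochhammer ℝ j).eval (α + 1) *
          (ascPochhammer ℝ (n - j)).eval ((α + 1) + j)
        = (ascPochhammer ℝ n).eval (α + 1) := by
      have h := congrArg (Polynomial.eval (α + 1)) (ascPochhammer_mul (S := ℝ) j (n - j))
      rw [Nat.add_sub_cancel' hjn] at h
      simpa [eval_mul, eval_comp] using h
    have hcomp : pbig.eval (j : ℝ) = (ascPochhammer ℝ k).eval ((α + 1) + j) := by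
      rw [hpbig, eval_comp, eval_add, eval_X, eval_C, add_comm]
    have harg : α + (j:ℝ) + 1 = (α + 1) + j := by ring
    have hfact : ((n.choose j : ℝ)) * (j.factorial : ℝ) * ((n - j).factorial : ℝ)
        = (n.factorial : ℝ) := by
      exact_mod_cast congrArg (Nat.cast (R := ℝ))
        (Nat.choose_mul_factorial_mul_factorial hjn)
    have hpj : (ascPochhammer ℝ j).eval (α + 1) ≠ 0 := (ascPochhammer_pos j _ hα1).ne'
    have hfj : ((j.factorial : ℕ) : ℝ) ≠ 0 := by exact_mod_cast Nat.factorial_ne_zero j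
    have hfnj : (((n - j).factorial : ℕ) : ℝ) ≠ 0 := by
      exact_mod_cast Nat.factorial_ne_zero (n - j)
    have hfn : (((n).factorial : ℕ) : ℝ) ≠ 0 := by exact_mod_cast Nat.factorial_ne_zero n
    have hch : ((n.choose j : ℕ) : ℝ) ≠ 0 := by exact_mod_cast (Nat.choose_pos hjn).ne'
    rw [eΓ, hcomp, harg, ← hsplit1, ← hsplit2, ← hfact]
    field_simp
  rw [Finset.sum_congr rfl hterm, ← Finset.mul_sum]
  have hdegp : pbig.degree < (n : WithBot ℕ) := by
    have h1 : pbig.natDegree ≤ k := by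
      rw [hpbig]
      refine (natDegree_comp).le.trans ?_
      rw [ascPochhammer_natDegree, natDegree_X_add_C, mul_one]
    refine lt_of_le_of_lt (degree_le_natDegree) ?_
    exact_mod_cast lt_of_le_of_lt h1 hk
  rw [altsum n pbig hdegp, mul_zero]

lemma laguerre_orth {α : ℝ} (hα : -1 < α) (n : ℕ) :
    ∀ q : Polynomial ℝ, q.degree < (n : WithBot ℕ) → mom α (laguerre α n * q) = 0 :=
  mom_mul_eq_zero_of_forall_lt hα (fun k hk => mom_laguerre hα n k hk)

lemma mom_neg (α : ℝ) (f : Polynomial ℝ) : mom α (-f) = - mom α f := by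
  have h := mom_smul α (-1) f
  simpa using h

lemma mom_sub {α : ℝ} (hα : -1 < α) (f g : Polynomial ℝ) :
    mom α (f - g) = mom α f - mom α g := by
  rw [sub_eq_add_neg, mom_add hα, mom_neg, sub_eq_add_neg]

lemma iterderiv_eval_zero {p : Polynomial ℝ} {a : ℝ} {m : ℕ}
    (h : (X - C a) ^ (m + 1) ∣ p) : (Polynomial.derivative^[m] p).eval a = 0 := by
  rcases eq_or_ne p 0 with rfl | hp
  · simp
  · have h1 : m + 1 ≤ p.rootMultiplicity a := (Polynomial.le_rootMultiplicity_iff hp).mpr h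
    exact Polynomial.isRoot_iterate_derivative_of_lt_rootMultiplicity
      (Nat.lt_of_lt_of_le (Nat.lt_succ_self m) h1)

lemma degree_finsum_lt (m : ℕ) (b : Fin m → ℝ) :
    (∑ t : Fin m, b t • (X : Polynomial ℝ) ^ (t : ℕ)).degree < (m : WithBot ℕ) := by
  refine lt_of_le_of_lt (degree_sum_le _ _) ?_
  refine (Finset.sup_lt_iff (by exact_mod_cast WithBot.bot_lt_coe m)).mpr ?_
  intro t _
  refine lt_of_le_of_lt (degree_smul_le _ _) ?_
  rw [degree_X_pow]
  exact_mod_cast t.isLt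

lemma finsum_Xpow_coeff {m : ℕ} {b : Fin m → ℝ}
    (h : ∑ t : Fin m, b t • (X : Polynomial ℝ) ^ (t : ℕ) = 0) : ∀ t, b t = 0 := by
  intro t
  have h2 := congrArg (fun p => Polynomial.coeff p (t : ℕ)) h
  simp only [finset_sum_coeff, coeff_smul, coeff_X_pow, coeff_zero, smul_eq_mul] at h2
  rw [Finset.sum_eq_single t] at h2
  · simpa using h2
  · intro u _ hut
    have hne : ¬ ((t : ℕ) = (u : ℕ)) := fun hh => hut (Fin.ext hh.symm)
    simp [hne]
  · intro ht
    exact absurd (Finset.mem_univ t) ht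

end SobolevAux

open SobolevAux

/-- Connection formula: under condition (17), the Sobolev-orthogonal polynomial `S_n` is a
combination `Σ_{j=0}^ν λ_j ζ_j P_{n−j}^{[j]}`, where `P_m^{[j]}` are orthogonal with respect
to the modified weight `ζ_j(x)^2 x^α e^{−x}`. -/
theorem sobolev_connection_formula_zeta (α : ℝ) (hα : -1 < α) (M : ℕ) (hM : 1 ≤ M)
    (c : Fin M → ℝ) (hc : Function.Injective c) (μ : Fin M → ℝ) (ν : Fin M → ℕ)
    (N : ℕ) (hN : N = ∑ j, (ν j + 1))
    (ζ : ℕ → Polynomial ℝ) (hζ0 : ζ 0 = 1)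
    (hζN : ζ N = ∏ j, (Polynomial.X - Polynomial.C (c j)) ^ (ν j + 1))
    (hζdeg : ∀ k ≤ N, (ζ k).natDegree = k)
    (hζdvd : ∀ k < N, ζ k ∣ ζ (k + 1))
    (P : ℕ → ℕ → Polynomial ℝ)
    (hPdeg : ∀ j ≤ N, ∀ m, (P j m).natDegree = m)
    (hPorth : ∀ j ≤ N, ∀ m : ℕ, ∀ q : Polynomial ℝ, q.degree < m →
      ∫ x in Set.Ioi (0 : ℝ),
        (P j m).eval x * q.eval x * (ζ j).eval x ^ 2 * x ^ α * Real.exp (-x) = 0)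
    (hPnorm : ∀ j ≤ N, ∀ m,
      (∫ x in Set.Ioi (0 : ℝ),
        ((P j m).eval x) ^ 2 * (ζ j).eval x ^ 2 * x ^ α * Real.exp (-x)) ≠ 0)
    (n : ℕ) (hn : N ≤ n)
    (hcond : ∀ i : Fin M,
      (laguerre α n).eval (c i) * ∏ j ∈ Finset.Icc 1 N, (P j (n - j)).eval (c i) ≠ 0)
    (S : Polynomial ℝ) (hdeg : S.natDegree = n)
    (hlead : S.leadingCoeff = (-1) ^ n / n.factorial)
    (horth : ∀ p : Polynomial ℝ, p.degree < n → sobolevInner α c μ ν S p = 0) :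
    ∃ l : ℕ → ℝ, (∃ j ≤ N, l j ≠ 0) ∧ ∀ x : ℝ,
      S.eval x = ∑ j ∈ Finset.range (N + 1),
        l j * (ζ j).eval x * (P j (n - j)).eval x := by
  classical
  -- translated hypotheses
  have hPorth' : ∀ j ≤ N, ∀ m : ℕ, ∀ q : Polynomial ℝ, q.degree < (m : WithBot ℕ) →
      mom α (P j m * q * (ζ j) ^ 2) = 0 := by
    intro j hj m q hq
    have h := hPorth j hj m q hq
    rw [mom]
    simpa only [eval_mul, eval_pow] using h
  have hPne : ∀ j ≤ N, ∀ m, P j m ≠ 0 := by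
    intro j hj m hP0
    apply hPnorm j hj m
    rw [hP0]
    simp
  have hZmonic : (ζ N).Monic := by
    rw [hζN]
    exact monic_prod_of_monic _ _ (fun i _ => (monic_X_sub_C (c i)).pow _)
  have hZne : ζ N ≠ 0 := hZmonic.ne_zero
  have hchain : ∀ j k : ℕ, j ≤ k → k ≤ N → ζ j ∣ ζ k := by
    intro j k hjk hkN
    induction k, hjk using Nat.le_induction with
    | base => exact dvd_rfl
    | succ k hk ih => exact (ih (by omega)).trans (hζdvd k (by omega))
  have hζne : ∀ j ≤ N, ζ j ≠ 0 := by
    intro j hj h0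
    exact hZne (zero_dvd_iff.mp (h0 ▸ hchain j N hj le_rfl))
  set qpoly : Fin (N + 1) → Polynomial ℝ := fun j => ζ (j : ℕ) * P (j : ℕ) (n - (j : ℕ))
    with hqpoly
  -- orthogonality of the q's against low-degree multiples of ζ N
  have hqW : ∀ j : Fin (N + 1), ∀ r : Polynomial ℝ, r.degree < ((n - N : ℕ) : WithBot ℕ) →
      mom α (qpoly j * r * ζ N) = 0 := by
    intro j r hr
    have hjN : (j : ℕ) ≤ N := Nat.lt_succ_iff.mp j.isLt
    obtain ⟨u, hu⟩ := hchain j N hjN le_rfl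
    have hune : u ≠ 0 := by
      rintro rfl
      rw [mul_zero] at hu
      exact hZne hu
    have hudeg : u.natDegree = N - (j : ℕ) := by
      have h1 := hζdeg N le_rfl
      have h2 := hζdeg (j : ℕ) hjN
      have h3 : (ζ N).natDegree = (ζ (j : ℕ)).natDegree + u.natDegree := by
        rw [hu, natDegree_mul (hζne _ hjN) hune]
      omega
    have e : qpoly j * r * ζ N = P (j : ℕ) (n - (j : ℕ)) * (r * u) * (ζ (j : ℕ)) ^ 2 := by
      rw [hqpoly, hu]
      ring
    rw [e]
    apply hPorth' (j : ℕ) hjN (n - (j : ℕ))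
    rcases eq_or_ne r 0 with rfl | hr0
    · rw [zero_mul, degree_zero]
      exact WithBot.bot_lt_coe _
    · have hrd : r.natDegree < n - N := (natDegree_lt_iff_degree_lt hr0).mpr hr
      have hru : (r * u).natDegree < n - (j : ℕ) := by
        rw [natDegree_mul hr0 hune, hudeg]
        omega
      exact (natDegree_lt_iff_degree_lt (mul_ne_zero hr0 hune)).mp hru
  have hSne : S ≠ 0 := by
    intro h0
    rw [h0, leadingCoeff_zero] at hlead
    have hne : ((-1:ℝ)) ^ n / n.factorial ≠ 0 :=
      div_ne_zero (pow_ne_zero _ (by norm_num)) (by exact_mod_cast n.factorial_ne_zero)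
    exact hne hlead.symm
  -- Sobolev orthogonality gives standard orthogonality against multiples of ζ N
  have hSW : ∀ r : Polynomial ℝ, r.degree < ((n - N : ℕ) : WithBot ℕ) →
      mom α (S * r * ζ N) = 0 := by
    intro r hr
    rcases eq_or_ne r 0 with rfl | hr0
    · simp
    have hpdeg : (r * ζ N).degree < (n : WithBot ℕ) := by
      have h1 : (r * ζ N).natDegree < n := by
        rw [natDegree_mul hr0 hZne, hζdeg N le_rfl]
        have := (natDegree_lt_iff_degree_lt hr0).mpr hr
        omega
      exact (natDegree_lt_iff_degree_lt (mul_ne_zero hr0 hZne)).mp h1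
    have h := horth (r * ζ N) hpdeg
    rw [sobolevInner] at h
    have hder : ∀ i : Fin M, (Polynomial.derivative^[ν i] (r * ζ N)).eval (c i) = 0 := by
      intro i
      apply iterderiv_eval_zero
      have h1 : (X - C (c i)) ^ (ν i + 1) ∣ ζ N := by
        rw [hζN]
        exact Finset.dvd_prod_of_mem _ (Finset.mem_univ i)
      exact h1.trans (dvd_mul_left _ _)
    rw [Finset.sum_eq_zero (fun i _ => by rw [hder i, mul_zero]), add_zero] at h
    have h2 : mom α (S * (r * ζ N)) = 0 := by
      rw [mom]
      simpa only [eval_mul] using h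
    rwa [← mul_assoc] at h2
  -- the Laguerre polynomial is proportional to P 0 n
  have hP0ne : P 0 n ≠ 0 := hPne 0 (Nat.zero_le N) n
  have hP0deg : (P 0 n).natDegree = n := hPdeg 0 (Nat.zero_le N) n
  have hP0orth : ∀ q : Polynomial ℝ, q.degree < (n : WithBot ℕ) →
      mom α (P 0 n * q) = 0 := by
    intro q hq
    have h := hPorth' 0 (Nat.zero_le N) n q hq
    rw [hζ0] at h
    simpa using h
  have hP0lc : (P 0 n).leadingCoeff ≠ 0 := leadingCoeff_ne_zero.mpr hP0ne
  have hLne := laguerre_ne_zero α n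
  have hLlc : (laguerre α n).leadingCoeff ≠ 0 := leadingCoeff_ne_zero.mpr hLne
  set t := (laguerre α n).leadingCoeff / (P 0 n).leadingCoeff with ht
  have htne : t ≠ 0 := div_ne_zero hLlc hP0lc
  have hLP : laguerre α n = C t * P 0 n := by
    by_contra hD
    have hDne : laguerre α n - C t * P 0 n ≠ 0 := sub_ne_zero.mpr hD
    have hdeg1 : (laguerre α n).degree = (C t * P 0 n).degree := by
      rw [degree_C_mul htne, laguerre_degree α n, degree_eq_natDegree hP0ne, hP0deg]
    have hlc1 : (laguerre α n).leadingCoeff = (C t * P 0 n).leadingCoeff := by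
      rw [leadingCoeff_mul, leadingCoeff_C, ht, div_mul_cancel₀ _ hP0lc]
    have hDdeg : (laguerre α n - C t * P 0 n).degree < (laguerre α n).degree :=
      degree_sub_lt hdeg1 hLne hlc1
    have hDlt : (laguerre α n - C t * P 0 n).degree < (n : WithBot ℕ) := by
      rwa [laguerre_degree α n] at hDdeg
    have hmom : mom α ((laguerre α n - C t * P 0 n) ^ 2) = 0 := by
      have e : (laguerre α n - C t * P 0 n) ^ 2
          = laguerre α n * (laguerre α n - C t * P 0 n)
            - t • (P 0 n * (laguerre α n - C t * P 0 n)) := by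
        rw [smul_eq_C_mul]
        ring
      rw [e, mom_sub hα, mom_smul, laguerre_orth hα n _ hDlt, hP0orth _ hDlt, mul_zero,
        sub_zero]
    exact hDne (eq_zero_of_mom_sq hα hmom)
  have hP0eval : ∀ i : Fin M, (P 0 n).eval (c i) ≠ 0 := by
    intro i h0
    have h1 : (laguerre α n).eval (c i) ≠ 0 := left_ne_zero_of_mul (hcond i)
    apply h1
    rw [hLP, eval_mul, eval_C, h0, mul_zero]
  have hPjc : ∀ j : ℕ, 1 ≤ j → j ≤ N → ∀ i : Fin M, (P j (n - j)).eval (c i) ≠ 0 := by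
    intro j h1 h2 i
    have h := right_ne_zero_of_mul (hcond i)
    exact Finset.prod_ne_zero_iff.mp h j (Finset.mem_Icc.mpr ⟨h1, h2⟩)
  -- linear independence of the q's
  have hqind : LinearIndependent ℝ qpoly := by
    rw [Fintype.linearIndependent_iff]
    intro g hg
    by_contra hgne
    push_neg at hgne
    obtain ⟨i0, hi0⟩ := hgne
    set s : Finset (Fin (N + 1)) := Finset.univ.filter (fun i => g i ≠ 0) with hs
    have hsne : s.Nonempty := ⟨i0, by simp [hs, hi0]⟩
    set j0 := s.min' hsne with hj0
    have hj0mem : j0 ∈ s := s.min'_mem hsne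
    have hgj0 : g j0 ≠ 0 := by
      have := hj0mem
      rw [hs, Finset.mem_filter] at this
      exact this.2
    have hj0N : (j0 : ℕ) ≤ N := Nat.lt_succ_iff.mp j0.isLt
    have hmin : ∀ i : Fin (N + 1), (i : ℕ) < (j0 : ℕ) → g i = 0 := by
      intro i hij
      by_contra hne
      have hle : j0 ≤ i := s.min'_le i (by rw [hs, Finset.mem_filter]; exact ⟨Finset.mem_univ i, hne⟩)
      rw [Fin.le_def] at hle
      omega
    -- factor out ζ j0
    have hvv : ∀ i : Fin (N + 1), (j0 : ℕ) ≤ (i : ℕ) → ζ (j0 : ℕ) ∣ ζ (i : ℕ) := by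
      intro i hi
      exact hchain _ _ hi (Nat.lt_succ_iff.mp i.isLt)
    set v : Fin (N + 1) → Polynomial ℝ :=
      fun i => if h : (j0 : ℕ) ≤ (i : ℕ) then (hvv i h).choose else 0 with hvdef
    have hv : ∀ i : Fin (N + 1), (j0 : ℕ) ≤ (i : ℕ) → ζ (i : ℕ) = ζ (j0 : ℕ) * v i := by
      intro i hi
      rw [hvdef]
      simp only [dif_pos hi]
      exact (hvv i hi).choose_spec
    have hvj0 : v j0 = 1 := by
      have h := hv j0 le_rfl
      have h2 : ζ (j0 : ℕ) * 1 = ζ (j0 : ℕ) * v j0 := by rw [mul_one]; exact h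
      exact (mul_left_cancel₀ (hζne _ hj0N) h2).symm
    have hfactor : ∑ i, g i • qpoly i
        = ζ (j0 : ℕ) * ∑ i, g i • (v i * P (i : ℕ) (n - (i : ℕ))) := by
      rw [Finset.mul_sum]
      refine Finset.sum_congr rfl fun i _ => ?_
      rcases lt_or_ge (i : ℕ) (j0 : ℕ) with h | h
      · rw [hmin i h]
        simp
      · rw [hqpoly]
        simp only
        rw [hv i h, mul_smul_comm, mul_assoc]
    have hR : ∑ i, g i • (v i * P (i : ℕ) (n - (i : ℕ))) = 0 := by
      have h2 := hg
      rw [hfactor] at h2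
      exact (mul_eq_zero.mp h2).resolve_left (hζne _ hj0N)
    rcases eq_or_lt_of_le hj0N with hj0eq | hj0lt
    · -- j0 = N : only one surviving term
      have hsingle : ∑ i, g i • (v i * P (i : ℕ) (n - (i : ℕ)))
          = g j0 • (v j0 * P (j0 : ℕ) (n - (j0 : ℕ))) := by
        rw [← Finset.sum_subset (Finset.subset_univ {j0})]
        · rw [Finset.sum_singleton]
        · intro i _ hi
          have hine : i ≠ j0 := by simpa using hi
          have : (i : ℕ) < (j0 : ℕ) := by
            have h1 : (i : ℕ) ≤ N := Nat.lt_succ_iff.mp i.isLt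
            have h2 : (i : ℕ) ≠ (j0 : ℕ) := fun hh => hine (Fin.ext hh)
            omega
          rw [hmin i this, zero_smul]
      rw [hsingle, hvj0, one_mul] at hR
      rcases smul_eq_zero.mp hR with h | h
      · exact hgj0 h
      · exact hPne _ hj0N _ h
    · -- j0 < N : use the root of the next factor
      have hj1lt : (j0 : ℕ) + 1 < N + 1 := by omega
      set j1 : Fin (N + 1) := ⟨(j0 : ℕ) + 1, hj1lt⟩ with hj1
      have hj1v : (j1 : ℕ) = (j0 : ℕ) + 1 := rfl
      have hu1 : ζ ((j0 : ℕ) + 1) = ζ (j0 : ℕ) * v j1 := by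
        have := hv j1 (by rw [hj1v]; omega)
        rwa [hj1v] at this
      have hζ1ne : ζ ((j0 : ℕ) + 1) ≠ 0 := hζne _ (by omega)
      have hv1ne : v j1 ≠ 0 := by
        intro h0
        rw [h0, mul_zero] at hu1
        exact hζ1ne hu1
      have hv1deg : (v j1).natDegree = 1 := by
        have h1 := hζdeg ((j0 : ℕ) + 1) (by omega)
        have h2 := hζdeg (j0 : ℕ) hj0N
        have h3 : (ζ ((j0 : ℕ) + 1)).natDegree
            = (ζ (j0 : ℕ)).natDegree + (v j1).natDegree := by
          rw [hu1, natDegree_mul (hζne _ hj0N) hv1ne]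
        omega
      have hc1 : (v j1).coeff 1 ≠ 0 := by
        intro h0
        have hlc := leadingCoeff_ne_zero.mpr hv1ne
        rw [leadingCoeff, hv1deg] at hlc
        exact hlc h0
      set a : ℝ := -((v j1).coeff 0) / ((v j1).coeff 1) with ha
      have hroot : (v j1).eval a = 0 := by
        have hdle : (v j1).degree ≤ 1 := by
          rw [degree_eq_natDegree hv1ne, hv1deg]
          exact_mod_cast le_rfl
        conv_lhs => rw [eq_X_add_C_of_degree_le_one hdle]
        rw [eval_add, eval_mul, eval_C, eval_X, eval_C, ha]
        field_simp
        ring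
      have haroot : ∃ i : Fin M, a = c i := by
        have hdvd : v j1 ∣ ζ N := by
          have h4 : ζ ((j0 : ℕ) + 1) ∣ ζ N := hchain _ N (by omega) le_rfl
          have h5 : v j1 ∣ ζ ((j0 : ℕ) + 1) := Dvd.intro_left _ hu1.symm
          exact h5.trans h4
        obtain ⟨w, hw⟩ := hdvd
        have hZa : (ζ N).eval a = 0 := by rw [hw, eval_mul, hroot, zero_mul]
        rw [hζN, eval_prod] at hZa
        obtain ⟨i, _, hi⟩ := Finset.prod_eq_zero_iff.mp hZa
        rw [eval_pow, eval_sub, eval_X, eval_C] at hi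
        have := pow_eq_zero_iff (n := ν i + 1) (by omega) |>.mp hi
        exact ⟨i, by linarith [sub_eq_zero.mp this]⟩
      obtain ⟨iM, haM⟩ := haroot
      have heval := congrArg (Polynomial.eval a) hR
      rw [eval_finset_sum] at heval
      simp only [eval_smul, smul_eq_mul, eval_mul, eval_zero] at heval
      rw [Finset.sum_eq_single j0] at heval
      · rw [hvj0, eval_one, one_mul] at heval
        have hPa : (P (j0 : ℕ) (n - (j0 : ℕ))).eval a ≠ 0 := by
          rcases Nat.eq_zero_or_pos (j0 : ℕ) with h0 | h1
          · rw [h0, Nat.sub_zero, haM]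
            exact hP0eval iM
          · rw [haM]
            exact hPjc _ h1 hj0N iM
        rcases mul_eq_zero.mp heval with h | h
        · exact hgj0 h
        · exact hPa h
      · intro i _ hij0
        rcases lt_or_ge (i : ℕ) (j0 : ℕ) with h | h
        · rw [hmin i h, zero_mul]
        · have hgt : (j0 : ℕ) < (i : ℕ) := by
            have h2 : (i : ℕ) ≠ (j0 : ℕ) := fun hh => hij0 (Fin.ext hh)
            omega
          have hchain2 : ζ ((j0 : ℕ) + 1) ∣ ζ (i : ℕ) :=
            hchain _ _ (by omega) (Nat.lt_succ_iff.mp i.isLt)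
          obtain ⟨w2, hw2⟩ := hchain2
          have hvi : v i = v j1 * w2 := by
            have h5 : ζ (j0 : ℕ) * v i = ζ (j0 : ℕ) * (v j1 * w2) := by
              rw [← hv i (by omega), hw2, hu1]
              ring
            exact mul_left_cancel₀ (hζne _ hj0N) h5
          rw [hvi, eval_mul, hroot, zero_mul, zero_mul, mul_zero]
      · intro h
        exact absurd (Finset.mem_univ j0) h
  -- the spanning family
  set m' := n - N with hm'
  set u : Fin m' → Polynomial ℝ := fun t => ζ N * X ^ (t : ℕ) with hu
  set Hfam : Fin (N + 1) ⊕ Fin m' → Polynomial ℝ := Sum.elim qpoly u with hHfam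
  have hHmem : ∀ i, Hfam i ∈ degreeLT ℝ (n + 1) := by
    intro i
    rw [Polynomial.mem_degreeLT]
    cases i with
    | inl j =>
        have hjN : (j : ℕ) ≤ N := Nat.lt_succ_iff.mp j.isLt
        have h1 : (qpoly j).natDegree ≤ n := by
          rw [hqpoly]
          refine natDegree_mul_le.trans ?_
          rw [hζdeg _ hjN, hPdeg _ hjN]
          omega
        refine lt_of_le_of_lt degree_le_natDegree ?_
        exact_mod_cast Nat.lt_succ_of_le h1
    | inr tt =>
        have h1 : (u tt).natDegree ≤ n := by
          rw [hu]
          refine natDegree_mul_le.trans ?_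
          rw [hζdeg N le_rfl, natDegree_X_pow]
          have := tt.isLt
          omega
        refine lt_of_le_of_lt degree_le_natDegree ?_
        exact_mod_cast Nat.lt_succ_of_le h1
  have hHind : LinearIndependent ℝ Hfam := by
    rw [Fintype.linearIndependent_iff]
    intro b hb
    rw [Fintype.sum_sum_type] at hb
    simp only [hHfam, Sum.elim_inl, Sum.elim_inr] at hb
    set gpol := ∑ tt : Fin m', b (Sum.inr tt) • (X : Polynomial ℝ) ^ (tt : ℕ) with hgpol
    have h2 : ∑ tt : Fin m', b (Sum.inr tt) • u tt = ζ N * gpol := by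
      rw [hgpol, Finset.mul_sum]
      exact Finset.sum_congr rfl fun tt _ => by rw [hu]; exact (mul_smul_comm _ _ _).symm
    rw [h2] at hb
    have hgdeg : gpol.degree < ((m' : ℕ) : WithBot ℕ) := degree_finsum_lt _ _
    have hA : ∑ j, b (Sum.inl j) • qpoly j = -(ζ N * gpol) := by
      rw [eq_neg_iff_add_eq_zero]
      exact hb
    have hz : mom α ((ζ N * gpol) ^ 2) = 0 := by
      have e : (ζ N * gpol) ^ 2 = -((∑ j, b (Sum.inl j) • qpoly j) * gpol * ζ N) := by
        rw [hA]
        ring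
      have e2 : (∑ j, b (Sum.inl j) • qpoly j) * gpol * ζ N
          = ∑ j, b (Sum.inl j) • (qpoly j * gpol * ζ N) := by
        rw [Finset.sum_mul, Finset.sum_mul]
        exact Finset.sum_congr rfl fun j _ => by rw [smul_mul_assoc, smul_mul_assoc]
      rw [e, mom_neg, e2, mom_sum hα, Finset.sum_eq_zero, neg_zero]
      intro j _
      rw [mom_smul, hqW j gpol (by rwa [hm'] at hgdeg), mul_zero]
    have hzg : ζ N * gpol = 0 := by
      have := eq_zero_of_mom_sq hα hz
      exact this
    have hg0 : gpol = 0 := (mul_eq_zero.mp hzg).resolve_left hZne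
    have hbr : ∀ tt, b (Sum.inr tt) = 0 := finsum_Xpow_coeff (by rw [← hgpol]; exact hg0)
    have hbl : ∀ j, b (Sum.inl j) = 0 := by
      have hsum0 : ∑ j, b (Sum.inl j) • qpoly j = 0 := by
        rw [hA, hg0, mul_zero, neg_zero]
      exact fun j => (Fintype.linearIndependent_iff.mp hqind) _ hsum0 j
    intro i
    cases i with
    | inl j => exact hbl j
    | inr tt => exact hbr tt
  -- dimension count
  haveI : FiniteDimensional ℝ (degreeLT ℝ (n + 1)) :=
    (Polynomial.degreeLTEquiv ℝ (n + 1)).symm.finiteDimensional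
  have hfr : Module.finrank ℝ (degreeLT ℝ (n + 1)) = n + 1 := by
    rw [(Polynomial.degreeLTEquiv ℝ (n + 1)).finrank_eq, Module.finrank_pi]
    simp
  have hcard : Fintype.card (Fin (N + 1) ⊕ Fin m') = n + 1 := by
    simp only [Fintype.card_sum, Fintype.card_fin, hm']
    omega
  set Hfam' : Fin (N + 1) ⊕ Fin m' → degreeLT ℝ (n + 1) := fun i => ⟨Hfam i, hHmem i⟩
    with hHfam'
  have hHind' : LinearIndependent ℝ Hfam' := by
    apply LinearIndependent.of_comp ((degreeLT ℝ (n + 1)).subtype)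
    exact hHind
  have hspan := hHind'.span_eq_top_of_card_eq_finrank (by rw [hcard, hfr])
  have hSmem : S ∈ degreeLT ℝ (n + 1) := by
    rw [mem_degreeLT]
    refine lt_of_le_of_lt degree_le_natDegree ?_
    rw [hdeg]
    exact_mod_cast Nat.lt_succ_self n
  have hSmem' : (⟨S, hSmem⟩ : degreeLT ℝ (n + 1)) ∈ Submodule.span ℝ (Set.range Hfam') := by
    rw [hspan]
    trivial
  obtain ⟨cf, hcf⟩ := (Submodule.mem_span_range_iff_exists_fun ℝ).mp hSmem'
  have hcfS : ∑ i, cf i • Hfam i = S := by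
    have h := congrArg Subtype.val hcf
    simpa using h
  rw [Fintype.sum_sum_type] at hcfS
  simp only [hHfam, Sum.elim_inl, Sum.elim_inr] at hcfS
  set gpol := ∑ tt : Fin m', cf (Sum.inr tt) • (X : Polynomial ℝ) ^ (tt : ℕ) with hgpol
  have h2 : ∑ tt : Fin m', cf (Sum.inr tt) • u tt = ζ N * gpol := by
    rw [hgpol, Finset.mul_sum]
    exact Finset.sum_congr rfl fun tt _ => by rw [hu]; exact (mul_smul_comm _ _ _).symm
  rw [h2] at hcfS
  have hgdeg : gpol.degree < ((n - N : ℕ) : WithBot ℕ) := by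
    have h3 := degree_finsum_lt m' (fun tt => cf (Sum.inr tt))
    exact h3
  have hg0 : gpol = 0 := by
    have hS0 := hSW gpol hgdeg
    have e : S * gpol * ζ N
        = (∑ j, cf (Sum.inl j) • (qpoly j * gpol * ζ N)) + (ζ N * gpol) ^ 2 := by
      rw [← hcfS, add_mul, add_mul, Finset.sum_mul, Finset.sum_mul]
      congr 1
      · exact Finset.sum_congr rfl fun j _ => by rw [smul_mul_assoc, smul_mul_assoc]
      · ring
    rw [e, mom_add hα, mom_sum hα, Finset.sum_eq_zero
      (fun j _ => by rw [mom_smul, hqW j gpol hgdeg, mul_zero]), zero_add] at hS0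
    have hzg : ζ N * gpol = 0 := eq_zero_of_mom_sq hα hS0
    exact (mul_eq_zero.mp hzg).resolve_left hZne
  have hSsum : S = ∑ j : Fin (N + 1), cf (Sum.inl j) • qpoly j := by
    rw [← hcfS, hg0, mul_zero, add_zero]
  refine ⟨fun j => if h : j < N + 1 then cf (Sum.inl ⟨j, h⟩) else 0, ?_, ?_⟩
  · by_contra hall
    push_neg at hall
    apply hSne
    rw [hSsum]
    refine Finset.sum_eq_zero fun j _ => ?_
    have hj := hall (j : ℕ) (Nat.lt_succ_iff.mp j.isLt)
    rw [dif_pos j.isLt] at hj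
    rw [show (⟨(j : ℕ), j.isLt⟩ : Fin (N + 1)) = j from Fin.eta j j.isLt] at hj
    rw [hj, zero_smul]
  · intro x
    rw [hSsum, eval_finset_sum, ← Fin.sum_univ_eq_sum_range
      (fun j => (if h : j < N + 1 then cf (Sum.inl ⟨j, h⟩) else 0) * (ζ j).eval x
        * (P j (n - j)).eval x) (N + 1)]
    refine Finset.sum_congr rfl fun j _ => ?_
    rw [eval_smul, smul_eq_mul, hqpoly]
    simp only [eval_mul]
    rw [dif_pos j.isLt]
    rw [show (⟨(j : ℕ), j.isLt⟩ : Fin (N + 1)) = j from Fin.eta j j.isLt]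
    ring
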